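/- Let W be a real n×n matrix and let W ⊙ W denote its Hadamard square. If trace(exp(W ⊙ W)) = n, then the support digraph of W (edges i → j iff W i j ≠ 0) is acyclic: it has no closed directed walk of positive length. -/

import Mathlib

open scoped Matrix

lemma pow_entry_nonneg {n : ℕ} (Q : Matrix (Fin n) (Fin n) ℝ)
    (hQ : ∀ i j, 0 ≤ Q i j) : ∀ (k : ℕ) (i j : Fin n), 0 ≤ (Q ^ k) i j := by
  intro k
  induction k with
  | zero => intro i j; rw [pow_zero]; by_cases hij : i = j <;> simp [Matrix.one_apply, hij]
  | succ k ih =>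
    intro i j
    rw [pow_succ, Matrix.mul_apply]
    exact Finset.sum_nonneg fun m _ => mul_nonneg (ih i m) (hQ m j)

lemma walk_le_pow {n : ℕ} (Q : Matrix (Fin n) (Fin n) ℝ)
    (hQ : ∀ i j, 0 ≤ Q i j) (p : ℕ → Fin n) :
    ∀ k : ℕ, (∏ t ∈ Finset.range k, Q (p t) (p (t + 1))) ≤ (Q ^ k) (p 0) (p k) := by
  intro k
  induction k with
  | zero => simp [Matrix.one_apply]
  | succ k ih =>
    rw [Finset.prod_range_succ, pow_succ, Matrix.mul_apply]
    calc (∏ t ∈ Finset.range k, Q (p t) (p (t + 1))) * Q (p k) (p (k + 1))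
        ≤ (Q ^ k) (p 0) (p k) * Q (p k) (p (k + 1)) :=
          mul_le_mul_of_nonneg_right ih (hQ _ _)
      _ ≤ ∑ m, (Q ^ k) (p 0) m * Q m (p (k + 1)) :=
          Finset.single_le_sum (f := fun m => (Q ^ k) (p 0) m * Q m (p (k + 1)))
            (fun m _ => mul_nonneg (pow_entry_nonneg Q hQ k _ _) (hQ _ _))
            (Finset.mem_univ _)

theorem stmt_2 (n : ℕ) (W : Matrix (Fin n) (Fin n) ℝ)
    (h : (NormedSpace.exp
        (Matrix.of fun i j => (W i j) ^ 2 : Matrix (Fin n) (Fin n) ℝ)).trace = (n : ℝ)) :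
    ¬ ∃ (k : ℕ) (p : Fin (k + 1) → Fin n), 0 < k ∧ p 0 = p (Fin.last k) ∧
      ∀ t : Fin k, W (p t.castSucc) (p t.succ) ≠ 0 := by
  rintro ⟨k, p, hk, hcyc, hedge⟩
  set Q : Matrix (Fin n) (Fin n) ℝ := Matrix.of fun i j => (W i j) ^ 2 with hQdef
  have hQ : ∀ i j, 0 ≤ Q i j := fun i j => sq_nonneg _
  have htr_nonneg : ∀ m : ℕ, 0 ≤ (Q ^ m).trace := fun m =>
    Finset.sum_nonneg fun i _ => pow_entry_nonneg Q hQ m i i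
  -- positivity of trace (Q^k) via the cycle
  have htr_pos : 0 < (Q ^ k).trace := by
    set q : ℕ → Fin n := fun t => if ht : t < k + 1 then p ⟨t, ht⟩ else p 0 with hq
    have hq0 : q 0 = p 0 := by simp [hq]
    have hqk : q k = p (Fin.last k) := by
      simp only [hq, dif_pos (Nat.lt_succ_self k)]; rfl
    have hprod : 0 < ∏ t ∈ Finset.range k, Q (q t) (q (t + 1)) := by
      apply Finset.prod_pos
      intro t ht
      rw [Finset.mem_range] at ht
      have h1 : q t = p (Fin.castSucc ⟨t, ht⟩) := by
        simp only [hq, dif_pos (Nat.lt_succ_of_lt ht)]; rfl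
      have h2 : q (t + 1) = p (Fin.succ ⟨t, ht⟩) := by
        simp only [hq, dif_pos (Nat.succ_lt_succ ht)]; rfl
      rw [h1, h2]
      have hW := hedge ⟨t, ht⟩
      show (0 : ℝ) < (W _ _) ^ 2
      positivity
    have hdiag : 0 < (Q ^ k) (p 0) (p 0) := by
      have := walk_le_pow Q hQ q k
      rw [hq0, hqk, ← hcyc] at this
      exact hprod.trans_le this
    calc (0 : ℝ) < (Q ^ k) (p 0) (p 0) := hdiag
      _ ≤ (Q ^ k).trace :=
        Finset.single_le_sum (f := fun i => (Q ^ k) i i)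
          (fun i _ => pow_entry_nonneg Q hQ k i i) (Finset.mem_univ _)
  -- the exponential series
  letI : SeminormedRing (Matrix (Fin n) (Fin n) ℝ) := Matrix.linftyOpSemiNormedRing
  letI : NormedRing (Matrix (Fin n) (Fin n) ℝ) := Matrix.linftyOpNormedRing
  letI : NormedAlgebra ℝ (Matrix (Fin n) (Fin n) ℝ) := Matrix.linftyOpNormedAlgebra
  have hsum : HasSum (fun m : ℕ => ((m.factorial : ℝ)⁻¹) • Q ^ m) (NormedSpace.exp Q) :=
    NormedSpace.exp_series_hasSum_exp' Q
  have hsum' : HasSum (fun m : ℕ => ((m.factorial : ℝ)⁻¹) • (Q ^ m).trace)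
      ((NormedSpace.exp Q).trace) := by
    have H := hsum.map (Matrix.traceLinearMap (Fin n) ℝ ℝ).toAddMonoidHom
      (Continuous.matrix_trace continuous_id)
    have heq : (⇑(Matrix.traceLinearMap (Fin n) ℝ ℝ).toAddMonoidHom ∘
        fun m : ℕ => ((m.factorial : ℝ)⁻¹) • Q ^ m)
        = fun m : ℕ => ((m.factorial : ℝ)⁻¹) • (Q ^ m).trace := by
      funext m
      simp [Function.comp, Matrix.trace_smul]
    rwa [heq] at H
  have hf_nonneg : ∀ m : ℕ, 0 ≤ ((m.factorial : ℝ)⁻¹) • (Q ^ m).trace := fun m =>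
    smul_nonneg (by positivity) (htr_nonneg m)
  have hle : ∑ m ∈ ({0, k} : Finset ℕ), ((m.factorial : ℝ)⁻¹) • (Q ^ m).trace
      ≤ (NormedSpace.exp Q).trace :=
    sum_le_hasSum _ (fun m _ => hf_nonneg m) hsum'
  rw [Finset.sum_pair hk.ne] at hle
  have h0 : ((Nat.factorial 0 : ℝ)⁻¹) • (Q ^ 0).trace = (n : ℝ) := by
    simp [Matrix.trace_one]
  rw [h0, h] at hle
  have hkpos : 0 < ((k.factorial : ℝ)⁻¹) • (Q ^ k).trace :=
    smul_pos (by positivity) htr_pos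
  linarith
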